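/- For every finite set N of divisions, every assignment partition ((N_k, X_k))_{k=1}^K of N, every strict priority order ▷ on N, and every preference profile ≻, the assignment produced by the Chain Serial Dictatorship (C-SD) mechanism is feasible under the assignment partition and efficient under the assignment partition. -/
import Mathlib


open scoped Classical

/-- Each division has a strict linear (total) preference order over workers. -/
def StrictProfile {α : Type*} (pref : α → α → α → Prop) : Prop :=
  ∀ i, IsStrictTotalOrder α (pref i)

/-- `pref'` is an improvement for division `i` with respect to `pref`. -/
def Improvement {α : Type*} (pref pref' : α → α → α → Prop) (i : α) : Prop :=
  pref' i = pref i ∧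
  (∀ j, j ≠ i → ∀ k, k ≠ i → pref j i k → pref' j i k) ∧
  (∀ j, j ≠ i → ∀ k, k ≠ i → ∀ l, l ≠ i → (pref j k l ↔ pref' j k l))

/-- The `r`-maximum element of the finite set `s` (chosen via Hilbert choice):
the element of `s` that `r`-beats every other element of `s`. -/
noncomputable def pick {α : Type*} [Nonempty α] (r : α → α → Prop) (s : Finset α) : α :=
  Classical.epsilon fun m => m ∈ s ∧ ∀ x ∈ s, x ≠ m → r m x

/-- `((Npart k, Xpart k))_k` is an assignment partition: `Npart` partitions the
divisions, `Xpart` partitions the workers (both identified with `α`), and for each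
group `k` we have separation (`Npart k ∩ Xpart k = ∅`) and balance
(`|Npart k| = |Xpart k|`). -/
def IsAPartition {α : Type*} {K : ℕ} (Npart Xpart : Fin K → Finset α) : Prop :=
  (∀ a : α, ∃! k, a ∈ Npart k) ∧
  (∀ a : α, ∃! k, a ∈ Xpart k) ∧
  (∀ k, ∀ a ∈ Npart k, a ∉ Xpart k) ∧
  (∀ k, (Npart k).card = (Xpart k).card)

/-- The choice set `X_{g(i)}` of division `i`: the worker set of `i`'s group. -/
noncomputable def choiceSet {α : Type*} [DecidableEq α] {K : ℕ}
    (Npart Xpart : Fin K → Finset α) (i : α) : Finset α :=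
  Finset.univ.biUnion fun k => if i ∈ Npart k then Xpart k else ∅

/-- An assignment is feasible under the assignment partition if `μ(N_k) = X_k` for all `k`. -/
def FeasibleAP {α : Type*} [DecidableEq α] {K : ℕ}
    (Npart Xpart : Fin K → Finset α) (μ : α → α) : Prop :=
  ∀ k, (Npart k).image μ = Xpart k

/-- Efficiency under the assignment partition: `μ` is feasible and no feasible
assignment `μ'` weakly improves every division and strictly improves some division. -/
def EfficientAP {α : Type*} [DecidableEq α] {K : ℕ}
    (Npart Xpart : Fin K → Finset α) (pref : α → α → α → Prop) (μ : α → α) : Prop :=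
  FeasibleAP Npart Xpart μ ∧
  ¬ ∃ μ' : α → α, Function.Bijective μ' ∧ FeasibleAP Npart Xpart μ' ∧
      (∀ i, μ' i = μ i ∨ pref i (μ' i) (μ i)) ∧ (∃ j, pref j (μ' j) (μ j))

/-- One pass of the Chain Serial Dictatorship: `cur` is the active division,
`active` the set of divisions that have already chosen, `taken` the workers already
assigned and `μ` the partial assignment.  The active division takes its most
preferred worker in its group's choice set among those not yet taken; the right to
choose passes to the owner of the chosen worker (owner-call) if that owner has not
yet chosen, and otherwise to the `prio`-maximal not-yet-active division (fallback). -/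
noncomputable def csdStep {α : Type*} [Fintype α] [DecidableEq α] [Nonempty α] {K : ℕ}
    (Npart Xpart : Fin K → Finset α) (prio : α → α → Prop)
    (pref : α → α → α → Prop) :
    ℕ → α → Finset α → Finset α → (α → α) → (α → α)
  | 0, _, _, _, μ => μ
  | fuel + 1, cur, active, taken, μ =>
    let w := pick (pref cur) (choiceSet Npart Xpart cur \ taken)
    let active' := insert cur active
    let next := if w ∈ active' then pick prio (Finset.univ \ active') else w
    csdStep Npart Xpart prio pref fuel next active' (insert w taken)
      (Function.update μ cur w)

/-- The Chain Serial Dictatorship (C-SD) mechanism: the first active division is the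
`prio`-maximal one, and the chain runs for `|α|` steps so that every division chooses
exactly one worker. -/
noncomputable def csd {α : Type*} [Fintype α] [DecidableEq α] [Nonempty α] {K : ℕ}
    (Npart Xpart : Fin K → Finset α) (prio : α → α → Prop)
    (pref : α → α → α → Prop) : α → α :=
  csdStep Npart Xpart prio pref (Fintype.card α) (pick prio Finset.univ) ∅ ∅ (fun a => a)


open Finset in
lemma pick_spec' {α : Type*} [Nonempty α] (r : α → α → Prop) (hr : IsStrictTotalOrder α r)
    {s : Finset α} (hs : s.Nonempty) :
    pick r s ∈ s ∧ ∀ x ∈ s, x ≠ pick r s → r (pick r s) x := by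
  haveI := hr
  have hex : ∃ m, m ∈ s ∧ ∀ x ∈ s, x ≠ m → r m x := by
    letI : LinearOrder α := linearOrderOfSTO r
    refine ⟨s.min' hs, s.min'_mem hs, fun x hx hne => ?_⟩
    exact show (s.min' hs) < x from lt_of_le_of_ne (s.min'_le x hx) (Ne.symm hne)
  exact Classical.epsilon_spec hex

open Finset in
lemma choiceSet_eq' {α : Type*} [DecidableEq α] {K : ℕ} {Npart Xpart : Fin K → Finset α}
    (hN : ∀ a : α, ∃! k, a ∈ Npart k) {i : α} {k : Fin K} (hik : i ∈ Npart k) :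
    choiceSet Npart Xpart i = Xpart k := by
  ext a
  simp only [choiceSet, mem_biUnion, mem_univ, true_and]
  constructor
  · rintro ⟨k', hk'⟩
    split_ifs at hk' with h'
    · obtain ⟨k0, _, huniq⟩ := hN i
      rwa [(huniq k' h').trans (huniq k hik).symm] at hk'
    · exact absurd hk' (notMem_empty a)
  · exact fun h => ⟨k, by simp [hik, h]⟩

open Finset in
lemma csdStep_main {α : Type*} [Fintype α] [DecidableEq α] [Nonempty α] {K : ℕ}
    (Npart Xpart : Fin K → Finset α) (hpart : IsAPartition Npart Xpart)
    (prio : α → α → Prop) (hprio : IsStrictTotalOrder α prio)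
    (pref : α → α → α → Prop) (hpref : StrictProfile pref) :
    ∀ (fuel : ℕ) (cur : α) (active taken : Finset α) (μ : α → α),
    fuel + active.card = Fintype.card α →
    (0 < fuel → cur ∉ active) →
    (∀ k, (active ∩ Npart k).image μ = taken ∩ Xpart k) →
    (∀ i ∈ active, μ i ∈ choiceSet Npart Xpart i) →
    Set.InjOn μ active →
    active.image μ = taken →
    (∀ i ∈ active, csdStep Npart Xpart prio pref fuel cur active taken μ i = μ i) ∧
    (∀ i ∉ active, csdStep Npart Xpart prio pref fuel cur active taken μ i ∈
        choiceSet Npart Xpart i \ taken) ∧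
    Function.Injective (csdStep Npart Xpart prio pref fuel cur active taken μ) ∧
    (∀ μ' : α → α, Function.Injective μ' →
      (∀ i, μ' i ∈ choiceSet Npart Xpart i) →
      (∀ i ∈ active, μ' i = μ i) →
      (∀ i, μ' i = csdStep Npart Xpart prio pref fuel cur active taken μ i ∨
        pref i (μ' i) (csdStep Npart Xpart prio pref fuel cur active taken μ i)) →
      μ' = csdStep Npart Xpart prio pref fuel cur active taken μ) := by
  intro fuel
  induction fuel with
  | zero =>
    intro cur active taken μ hcard _ _ _ hinj _
    have hactive : active = univ := by
      apply Finset.eq_univ_of_card; simpa using hcard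
    simp only [csdStep]
    refine ⟨fun i _ => trivial, fun i hi => absurd (hactive ▸ mem_univ i) hi, ?_, ?_⟩
    · have : Set.InjOn μ Set.univ := by rw [← Finset.coe_univ, ← hactive]; exact hinj
      exact fun a b h => this (Set.mem_univ a) (Set.mem_univ b) h
    · intro μ' _ _ hagree _
      funext i; exact hagree i (hactive ▸ mem_univ i)
  | succ f IH =>
    intro cur active taken μ hcard hcur0 hgroup hmem hinj himg
    have hcur : cur ∉ active := hcur0 (Nat.succ_pos f)
    obtain ⟨k, hk, hkuniq⟩ := hpart.1 cur
    have hchoice : choiceSet Npart Xpart cur = Xpart k := choiceSet_eq' hpart.1 hk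
    -- nonemptiness of the choice set minus taken
    have hcardint : (Xpart k ∩ taken).card = (active ∩ Npart k).card := by
      rw [inter_comm, ← hgroup k]
      exact Finset.card_image_of_injOn (hinj.mono (by
        intro x hx; exact (Finset.mem_inter.mp hx).1))
    have hlt : (active ∩ Npart k).card < (Npart k).card := by
      apply Finset.card_lt_card
      constructor
      · exact inter_subset_right
      · intro hsub
        exact hcur (Finset.mem_inter.mp (hsub hk)).1
    have hne : (choiceSet Npart Xpart cur \ taken).Nonempty := by
      rw [hchoice, ← Finset.card_pos]
      have h1 : (Xpart k ∩ taken).card + (Xpart k \ taken).card = (Xpart k).card :=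
        Finset.card_inter_add_card_sdiff _ _
      have h2 := hpart.2.2.2 k
      omega
    haveI := hpref cur
    set w := pick (pref cur) (choiceSet Npart Xpart cur \ taken) with hwdef
    obtain ⟨hwmem, hwbest⟩ := pick_spec' (pref cur) (hpref cur) hne
    rw [← hwdef] at hwmem hwbest
    have hwX : w ∈ Xpart k := by
      have h := (Finset.mem_sdiff.mp hwmem).1
      rwa [hchoice] at h
    have hwtaken : w ∉ taken := (Finset.mem_sdiff.mp hwmem).2
    set active' := insert cur active with hadef
    set taken' := insert w taken with htdef
    set μ₂ := Function.update μ cur w with hmdef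
    set next := if w ∈ active' then pick prio (Finset.univ \ active') else w with hndef
    have hstep : csdStep Npart Xpart prio pref (f + 1) cur active taken μ =
        csdStep Npart Xpart prio pref f next active' taken' μ₂ := by
      rw [csdStep]
    have hcard' : active'.card = active.card + 1 := Finset.card_insert_of_notMem hcur
    -- hypotheses for IH
    have H1 : f + active'.card = Fintype.card α := by omega
    have H2 : 0 < f → next ∉ active' := by
      intro hf
      have hlt' : active'.card < Fintype.card α := by omega
      by_cases hw : w ∈ active'
      · have hne' : (Finset.univ \ active').Nonempty := by
          rw [← Finset.card_pos, Finset.card_sdiff_of_subset (Finset.subset_univ _), Finset.card_univ]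
          omega
        have := (pick_spec' prio hprio hne').1
        rw [hndef, if_pos hw]
        exact (Finset.mem_sdiff.mp this).2
      · rw [hndef, if_neg hw]; exact hw
    have hupd : ∀ x ∈ active, μ₂ x = μ x := by
      intro x hx
      exact Function.update_of_ne (fun h => hcur (by rw [← h]; exact hx)) _ _
    have hupc : μ₂ cur = w := by rw [hmdef]; exact Function.update_self _ _ _
    have H3 : ∀ k', (active' ∩ Npart k').image μ₂ = taken' ∩ Xpart k' := by
      intro k'
      by_cases hkk : k' = k
      · subst hkk
        rw [hadef, Finset.insert_inter_of_mem hk, Finset.image_insert]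
        rw [hupc, htdef, Finset.insert_inter_of_mem hwX, ← hgroup k']
        congr 1
        exact Finset.image_congr (fun x hx => hupd x (Finset.mem_inter.mp hx).1)
      · have hcurk' : cur ∉ Npart k' := fun h => hkk (hkuniq k' h)
        have hwk' : w ∉ Xpart k' := by
          intro h
          obtain ⟨k0, _, huniq⟩ := hpart.2.1 w
          exact hkk ((huniq k' h).trans (huniq k hwX).symm)
        rw [hadef, Finset.insert_inter_of_notMem hcurk', htdef,
          Finset.insert_inter_of_notMem hwk', ← hgroup k']
        exact Finset.image_congr (fun x hx => hupd x (Finset.mem_inter.mp hx).1)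
    have H4 : ∀ i ∈ active', μ₂ i ∈ choiceSet Npart Xpart i := by
      intro i hi
      rcases Finset.mem_insert.mp hi with rfl | hi
      · rw [hupc]
        exact (Finset.mem_sdiff.mp hwmem).1
      · rw [hupd i hi]; exact hmem i hi
    have H5 : Set.InjOn μ₂ active' := by
      intro x hx y hy hxy
      have hx' : x = cur ∨ x ∈ active := by
        have h : x ∈ active' := Finset.mem_coe.mp hx
        rw [hadef] at h; exact Finset.mem_insert.mp h
      have hy' : y = cur ∨ y ∈ active := by
        have h : y ∈ active' := Finset.mem_coe.mp hy
        rw [hadef] at h; exact Finset.mem_insert.mp h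
      rcases hx' with rfl | hx' <;> rcases hy' with rfl | hy'
      · rfl
      · exfalso
        rw [hupc, hupd y hy'] at hxy
        apply hwtaken
        rw [← himg, hxy]
        exact Finset.mem_image_of_mem μ hy'
      · exfalso
        rw [hupc, hupd x hx'] at hxy
        apply hwtaken
        rw [← himg, ← hxy]
        exact Finset.mem_image_of_mem μ hx'
      · exact hinj hx' hy' (by rwa [hupd x hx', hupd y hy'] at hxy)
    have H6 : active'.image μ₂ = taken' := by
      rw [hadef, Finset.image_insert]
      rw [hupc, htdef, ← himg]
      congr 1
      exact Finset.image_congr (fun x hx => hupd x hx)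
    obtain ⟨ha, hb, hc, hd⟩ := IH next active' taken' μ₂ H1 H2 H3 H4 H5 H6
    rw [hstep]
    have hfcur : csdStep Npart Xpart prio pref f next active' taken' μ₂ cur = w := by
      rw [ha cur (Finset.mem_insert_self _ _)]; exact hupc
    refine ⟨?_, ?_, hc, ?_⟩
    · intro i hi
      rw [ha i (Finset.mem_insert_of_mem hi)]; exact hupd i hi
    · intro i hi
      by_cases hic : i = cur
      · subst hic; rw [hfcur]; exact hwmem
      · have hi' : i ∉ active' := by
          simp only [hadef, Finset.mem_insert, not_or]; exact ⟨hic, hi⟩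
        have := hb i hi'
        rw [Finset.mem_sdiff] at this ⊢
        exact ⟨this.1, fun h => this.2 (Finset.mem_insert_of_mem h)⟩
    · intro μ' hinj' hfeas' hagree himp
      have hcurval : μ' cur = w := by
        have h1 : μ' cur ∈ choiceSet Npart Xpart cur := hfeas' cur
        have h2 : μ' cur ∉ taken := by
          intro h
          rw [← himg] at h
          obtain ⟨j, hj, hje⟩ := Finset.mem_image.mp h
          rw [← hagree j hj] at hje
          exact hcur (hinj' hje ▸ hj)
        have h3 : μ' cur ∈ choiceSet Npart Xpart cur \ taken := Finset.mem_sdiff.mpr ⟨h1, h2⟩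
        rcases himp cur with h | h
        · rwa [hfcur] at h
        · rw [hfcur] at h
          by_contra hne'
          have := hwbest _ h3 hne'
          exact absurd h (asymm this)
      have hagree' : ∀ i ∈ active', μ' i = μ₂ i := by
        intro i hi
        rcases Finset.mem_insert.mp hi with rfl | hi
        · rw [hcurval, hupc]
        · rw [hagree i hi, hupd i hi]
      exact hd μ' hinj' hfeas' hagree' himp


/-- The assignment produced by Chain Serial Dictatorship is an assignment that is
feasible under the assignment partition and efficient under the assignment
partition. -/
theorem csd_efficient_under_partition {α : Type*} [Fintype α] [DecidableEq α]
    [Nonempty α] {K : ℕ} (Npart Xpart : Fin K → Finset α)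
    (hpart : IsAPartition Npart Xpart)
    (prio : α → α → Prop) (hprio : IsStrictTotalOrder α prio)
    (pref : α → α → α → Prop) (hpref : StrictProfile pref) :
    Function.Bijective (csd Npart Xpart prio pref) ∧
    FeasibleAP Npart Xpart (csd Npart Xpart prio pref) ∧
    EfficientAP Npart Xpart pref (csd Npart Xpart prio pref) := by
  classical
  obtain ⟨_, hb, hc, hd⟩ := csdStep_main Npart Xpart hpart prio hprio pref hpref
    (Fintype.card α) (pick prio Finset.univ) ∅ ∅ (fun a => a)
    (by simp) (fun _ => Finset.notMem_empty _) (by simp) (by simp)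
    (by simp) (by simp)
  have hcsd : csd Npart Xpart prio pref = csdStep Npart Xpart prio pref
      (Fintype.card α) (pick prio Finset.univ) ∅ ∅ (fun a => a) := rfl
  rw [hcsd]
  set μf := csdStep Npart Xpart prio pref (Fintype.card α)
    (pick prio Finset.univ) ∅ ∅ (fun a => a) with hμf
  have hμ : ∀ i, μf i ∈ choiceSet Npart Xpart i := by
    intro i
    have := hb i (Finset.notMem_empty i)
    exact (Finset.mem_sdiff.mp this).1
  have hbij : Function.Bijective μf := (Finite.injective_iff_bijective).mp hc
  have hfeas : FeasibleAP Npart Xpart μf := by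
    intro k
    apply Finset.eq_of_subset_of_card_le
    · intro x hx
      obtain ⟨i, hi, rfl⟩ := Finset.mem_image.mp hx
      have := hμ i
      rwa [choiceSet_eq' hpart.1 hi] at this
    · rw [Finset.card_image_of_injective _ hc]
      exact le_of_eq (hpart.2.2.2 k).symm
  refine ⟨hbij, hfeas, hfeas, ?_⟩
  rintro ⟨μ', hbij', hfeas', himp', j, hj⟩
  have hfeas'' : ∀ i, μ' i ∈ choiceSet Npart Xpart i := by
    intro i
    obtain ⟨k, hk, _⟩ := hpart.1 i
    rw [choiceSet_eq' hpart.1 hk, ← hfeas' k]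
    exact Finset.mem_image_of_mem μ' hk
  have heq := hd μ' hbij'.1 hfeas'' (fun i hi => absurd hi (Finset.notMem_empty i)) himp'
  rw [heq] at hj
  haveI := hpref j
  exact irrefl_of (pref j) _ hj
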